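/- arXiv:1711.00498 — 2 statements merged into one kernel-verified Lean document; each statement's English description precedes it below -/
import Mathlib

section
/- Hardy-type control of u by the conformal energy: if u is sufficiently regular on K_{[s_0,s_1]} and vanishes near the conical boundary, then ‖(s/r)u‖_{L^2(H_s)} ≤ 2 E_c(s,u)^{1/2}, where r = |x|. -/
open MeasureTheory

noncomputable section

/-- Partial derivative in direction `i` on `ℝ^{1+3}` (index 0 = time). -/
def pd (i : Fin 4) (f : (Fin 4 → ℝ) → ℝ) (p : Fin 4 → ℝ) : ℝ :=
  fderiv ℝ f p (Pi.single i 1)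

/-- Hyperbolic time `s = √(t² − |x|²)`. -/
def sfun (p : Fin 4 → ℝ) : ℝ :=
  Real.sqrt ((p 0) ^ 2 - (p 1) ^ 2 - (p 2) ^ 2 - (p 3) ^ 2)

/-- Spatial radius `r = |x|`. -/
def rfun (p : Fin 4 → ℝ) : ℝ :=
  Real.sqrt ((p 1) ^ 2 + (p 2) ^ 2 + (p 3) ^ 2)

/-- Lorentz boost `L_a = x^a ∂_t + t ∂_a`. -/
def Lop (a : Fin 3) (u : (Fin 4 → ℝ) → ℝ) (p : Fin 4 → ℝ) : ℝ :=
  p a.succ * pd 0 u p + p 0 * pd a.succ u p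

/-- Semi-hyperboloidal time derivative `∂̄_s = (s/t)∂_t`. -/
def pbs (u : (Fin 4 → ℝ) → ℝ) (p : Fin 4 → ℝ) : ℝ :=
  (sfun p / p 0) * pd 0 u p

/-- Semi-hyperboloidal spatial derivative `∂̄_a = (x^a/t)∂_t + ∂_a`. -/
def pba (a : Fin 3) (u : (Fin 4 → ℝ) → ℝ) (p : Fin 4 → ℝ) : ℝ :=
  (p a.succ / p 0) * pd 0 u p + pd a.succ u p

/-- The flat wave operator `□ = ∂_t² − Σ_a ∂_a²`. -/
def Box (u : (Fin 4 → ℝ) → ℝ) (p : Fin 4 → ℝ) : ℝ :=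
  pd 0 (pd 0 u) p - ∑ a : Fin 3, pd a.succ (pd a.succ u) p

/-- The multiplier `K u = s ∂̄_s u + 2 x^a ∂̄_a u`. -/
def Kop (u : (Fin 4 → ℝ) → ℝ) (p : Fin 4 → ℝ) : ℝ :=
  sfun p * pbs u p + ∑ a : Fin 3, 2 * p a.succ * pba a u p

/-- Parametrization of the hyperboloid `H_s`: `x ↦ (√(s²+|x|²), x)`. -/
def hyp (s : ℝ) (x : Fin 3 → ℝ) : Fin 4 → ℝ :=
  Fin.cons (Real.sqrt (s ^ 2 + ∑ a, (x a) ^ 2)) x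

/-- The flat conformal energy on the hyperboloid `H_s`. -/
def Ec (s : ℝ) (u : (Fin 4 → ℝ) → ℝ) : ℝ :=
  ∫ x : Fin 3 → ℝ,
    ((∑ a : Fin 3, (s * pba a u (hyp s x)) ^ 2)
      + (Kop u (hyp s x) + 2 * u (hyp s x)) ^ 2)

/-!
With `w x = s * u (hyp s x)` the chain rule gives `∂_a w = s ∂̄_a u` on `H_s`, so the claim is
Hardy's inequality `‖w / |x|‖ ≤ 2 ‖∇w‖` on `ℝ³` combined with `E_c(s, u) ≥ ∑_a ‖s ∂̄_a u‖²`.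
Because `H_s` approaches the light cone at infinity, the support condition on `u` makes `w`
compactly supported.

Hardy's inequality on `ℝⁿ`, `n ≥ 3`, is proved in polar coordinates. Along a ray it is the weighted
inequality `∫ ρ^m g² ≤ (2/(m+1))² ∫ ρ^(m+2) g'²` with `m = n - 3`: integrating
`(ρ^(m+1) g²)' = (m+1) ρ^m g² + 2 ρ^(m+1) g g'` gives zero, and AM-GM on the cross term does the
rest. By Cauchy-Schwarz, the radial derivative is bounded by the full gradient.
-/

open Set Filter Topology Metric Bornology
open scoped ENNReal

theorem intervalIntegral_pow_mul_sq_le (m : ℕ) {g g' : ℝ → ℝ} {R : ℝ} (hR : 0 ≤ R)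
    (hg : ∀ x, HasDerivAt g (g' x) x) (hg' : Continuous g') (hgR : g R = 0) :
    ∫ x in 0..R, x ^ m * g x ^ 2
      ≤ (2 / (m + 1)) ^ 2 * ∫ x in 0..R, x ^ (m + 2) * g' x ^ 2 := by
  have hgc : Continuous g := continuous_iff_continuousAt.2 fun x => (hg x).continuousAt
  have hm : (0 : ℝ) < m + 1 := by positivity
  have hint : ∀ f : ℝ → ℝ, Continuous f → IntervalIntegrable f volume 0 R :=
    fun f hf => hf.intervalIntegrable _ _
  have hibp : ∫ x in 0..R, 2 * g x * g' x * x ^ (m + 1) + g x ^ 2 * ((m + 1) * x ^ m) = 0 := by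
    rw [intervalIntegral.integral_deriv_mul_eq_sub (u := fun x => g x ^ 2)
      (v := fun x : ℝ => x ^ (m + 1))
      (fun x _ => by simpa [mul_comm, mul_left_comm] using (hg x).fun_pow 2)
      (fun x _ => by simpa using hasDerivAt_pow (m + 1) x)
      (hint _ (by fun_prop)) (hint _ (by fun_prop))]
    simp [hgR]
  have hamgm : ∫ x in 0..R,
        ((m + 1) / 2 * (x ^ m * g x ^ 2) - 2 / (m + 1) * (x ^ (m + 2) * g' x ^ 2))
      ≤ ∫ x in 0..R, 2 * g x * g' x * x ^ (m + 1) + g x ^ 2 * ((m + 1) * x ^ m) := by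
    refine intervalIntegral.integral_mono_on hR (hint _ (by fun_prop)) (hint _ (by fun_prop))
      fun x hx => ?_
    have hxm : 0 ≤ x ^ m := pow_nonneg hx.1 m
    have key : 0 ≤ x ^ m * ((m + 1) * g x + 2 * x * g' x) ^ 2 / (2 * (m + 1)) := by positivity
    have : 2 * g x * g' x * x ^ (m + 1) + g x ^ 2 * ((m + 1) * x ^ m)
        - ((m + 1) / 2 * (x ^ m * g x ^ 2) - 2 / (m + 1) * (x ^ (m + 2) * g' x ^ 2))
        = x ^ m * ((m + 1) * g x + 2 * x * g' x) ^ 2 / (2 * (m + 1)) := by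
      field_simp; ring
    linarith
  rw [hibp, intervalIntegral.integral_sub (hint _ (by fun_prop)) (hint _ (by fun_prop)),
    intervalIntegral.integral_const_mul, intervalIntegral.integral_const_mul] at hamgm
  set I := ∫ x in 0..R, x ^ m * g x ^ 2
  set J := ∫ x in 0..R, x ^ (m + 2) * g' x ^ 2
  have hfac : (2 / (m + 1)) ^ 2 * J - I = 2 / (m + 1) * (2 / (m + 1) * J - (m + 1) / 2 * I) := by
    field_simp
  nlinarith [mul_nonneg (by positivity : (0 : ℝ) ≤ 2 / (m + 1))
    (by linarith : 0 ≤ 2 / (m + 1) * J - (m + 1) / 2 * I)]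

theorem lintegral_Ioi_pow_mul_sq_le (m : ℕ) {g g' : ℝ → ℝ}
    (hg : ∀ x, HasDerivAt g (g' x) x) (hg' : Continuous g') (hg0 : ∀ᶠ x in atTop, g x = 0) :
    ∫⁻ x in Ioi 0, ENNReal.ofReal (x ^ m * g x ^ 2)
      ≤ ENNReal.ofReal ((2 / (m + 1)) ^ 2) *
        ∫⁻ x in Ioi 0, ENNReal.ofReal (x ^ (m + 2) * g' x ^ 2) := by
  have hgc : Continuous g := continuous_iff_continuousAt.2 fun x => (hg x).continuousAt
  obtain ⟨R, hR, hgR⟩ : ∃ R, 0 < R ∧ ∀ x, R ≤ x → g x = 0 := by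
    obtain ⟨R, hgR⟩ := eventually_atTop.1 hg0
    exact ⟨max R 1, by positivity, fun x hx => hgR x (le_of_max_le_left hx)⟩
  have hofReal : ∀ f : ℝ → ℝ, Continuous f → (∀ x, 0 ≤ x → 0 ≤ f x) →
      ∫⁻ x in Ioc 0 R, ENNReal.ofReal (f x) = ENNReal.ofReal (∫ x in 0..R, f x) := by
    intro f hf hf0
    rw [intervalIntegral.integral_of_le hR.le, ofReal_integral_eq_lintegral_ofReal
      hf.integrableOn_Ioc]
    filter_upwards [ae_restrict_mem measurableSet_Ioc] with x hx using hf0 x hx.1.le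
  calc ∫⁻ x in Ioi 0, ENNReal.ofReal (x ^ m * g x ^ 2)
      = ∫⁻ x in Ioc 0 R, ENNReal.ofReal (x ^ m * g x ^ 2) := by
        rw [← Ioc_union_Ioi_eq_Ioi hR.le,
          lintegral_union measurableSet_Ioi (Ioc_disjoint_Ioi le_rfl),
          setLIntegral_congr_fun (g := fun _ => 0) measurableSet_Ioi
            fun x hx => by simp [hgR x (le_of_lt hx)],
          lintegral_zero, add_zero]
    _ = ENNReal.ofReal (∫ x in 0..R, x ^ m * g x ^ 2) :=
        hofReal _ (by fun_prop) fun x hx => by positivity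
    _ ≤ ENNReal.ofReal ((2 / (m + 1)) ^ 2 * ∫ x in 0..R, x ^ (m + 2) * g' x ^ 2) :=
        ENNReal.ofReal_le_ofReal (intervalIntegral_pow_mul_sq_le m hR.le hg hg' (hgR R le_rfl))
    _ = ENNReal.ofReal ((2 / (m + 1)) ^ 2) *
          ∫⁻ x in Ioc 0 R, ENNReal.ofReal (x ^ (m + 2) * g' x ^ 2) := by
        rw [ENNReal.ofReal_mul (by positivity), hofReal _ (by fun_prop) fun x hx => by positivity]
    _ ≤ _ := by gcongr; exact Ioc_subset_Ioi_self

theorem lintegral_eq_lintegral_toSphere_lintegral_Ioi {E : Type*} [NormedAddCommGroup E]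
    [NormedSpace ℝ E] [FiniteDimensional ℝ E] [Nontrivial E] [MeasurableSpace E] [BorelSpace E]
    (μ : Measure E) [μ.IsAddHaarMeasure] {f : E → ℝ≥0∞} (hf : Measurable f) :
    ∫⁻ x, f x ∂μ = ∫⁻ θ, (∫⁻ ρ in Ioi (0 : ℝ),
      ENNReal.ofReal (ρ ^ (Module.finrank ℝ E - 1)) * f (ρ • (θ : E))) ∂μ.toSphere := by
  have hpolar : Measurable fun p : sphere (0 : E) 1 × Ioi (0 : ℝ) => f ((p.2 : ℝ) • (p.1 : E)) :=
    hf.comp (by fun_prop)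
  calc ∫⁻ x, f x ∂μ = ∫⁻ x : ({0}ᶜ : Set E), f x ∂(μ.comap (↑)) := by
        rw [lintegral_subtype_comap (measurableSet_singleton 0).compl, restrict_compl_singleton]
    _ = ∫⁻ p, f ((p.2 : ℝ) • (p.1 : E))
          ∂(μ.toSphere.prod (Measure.volumeIoiPow (Module.finrank ℝ E - 1))) := by
        rw [← (μ.measurePreserving_homeomorphUnitSphereProd).lintegral_comp_emb
          (Homeomorph.measurableEmbedding _)]
        simp_rw [← homeomorphUnitSphereProd_symm_apply_coe, Homeomorph.symm_apply_apply]
    _ = _ := by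
        rw [lintegral_prod _ hpolar.aemeasurable]
        refine lintegral_congr fun θ => ?_
        have hray : Measurable fun ρ : Ioi (0 : ℝ) => f ((ρ : ℝ) • (θ : E)) :=
          hf.comp (by fun_prop)
        rw [Measure.volumeIoiPow, lintegral_withDensity_eq_lintegral_mul _ (by fun_prop) hray,
          ← lintegral_subtype_comap measurableSet_Ioi]
        rfl

theorem norm_le_sqrt_sum_sq {ι : Type*} [Fintype ι] (x : ι → ℝ) : ‖x‖ ≤ √(∑ a, x a ^ 2) :=
  (pi_norm_le_iff_of_nonneg (Real.sqrt_nonneg _)).2 fun a => Real.abs_le_sqrt <|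
    Finset.single_le_sum (f := fun b => x b ^ 2) (fun _ _ => sq_nonneg _) (Finset.mem_univ a)

theorem sq_apply_le_sum_sq_mul_sum_sq {ι : Type*} [Fintype ι] [DecidableEq ι]
    (L : (ι → ℝ) →L[ℝ] ℝ) (v : ι → ℝ) :
    L v ^ 2 ≤ (∑ a, v a ^ 2) * ∑ a, L (Pi.single a 1) ^ 2 := by
  conv_lhs => rw [pi_eq_sum_univ' v, map_sum]
  simp only [map_smul, smul_eq_mul]
  exact Finset.sum_mul_sq_le_sq_mul_sq _ _ _

theorem HasCompactSupport.eventually_smul_eq_zero {E : Type*} [NormedAddCommGroup E]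
    [NormedSpace ℝ E] [ProperSpace E] {w : E → ℝ} (hw : HasCompactSupport w) {v : E} (hv : v ≠ 0) :
    ∀ᶠ ρ : ℝ in atTop, w (ρ • v) = 0 := by
  have hray : Tendsto (fun ρ : ℝ => ρ • v) atTop (cocompact E) := by
    rw [← cobounded_eq_cocompact, ← tendsto_norm_atTop_iff_cobounded]
    simp_rw [norm_smul]
    exact (tendsto_norm_atTop_atTop).atTop_mul_const (norm_pos_iff.2 hv)
  rw [hasCompactSupport_iff_eventuallyEq, coclosedCompact_eq_cocompact] at hw
  exact hray.eventually hw

/- Stated for every `v ≠ 0` because the polar coordinates of `ι → ℝ` use the unit sphere of the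
sup norm. -/
theorem hardy_inequality_along_ray {ι : Type*} [Fintype ι] [DecidableEq ι] (m : ℕ)
    {w : (ι → ℝ) → ℝ} (hw : ContDiff ℝ 1 w) (hw' : HasCompactSupport w) {v : ι → ℝ} (hv : v ≠ 0) :
    ∫⁻ ρ in Ioi 0, ENNReal.ofReal (ρ ^ (m + 2)) *
        ENNReal.ofReal ((w (ρ • v) / √(∑ a, (ρ • v) a ^ 2)) ^ 2)
      ≤ ∫⁻ ρ in Ioi 0, ENNReal.ofReal (ρ ^ (m + 2)) *
        ENNReal.ofReal ((2 / (m + 1)) ^ 2 * ∑ a, fderiv ℝ w (ρ • v) (Pi.single a 1) ^ 2) := by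
  set c := ∑ a, v a ^ 2
  have hc : 0 < c := by
    obtain ⟨a, ha⟩ := Function.ne_iff.1 hv
    exact lt_of_lt_of_le (sq_pos_of_ne_zero ha) (Finset.single_le_sum (fun b _ => sq_nonneg (v b))
      (Finset.mem_univ a))
  have hw1 : Differentiable ℝ w := hw.differentiable one_ne_zero
  have hg : ∀ ρ : ℝ, HasDerivAt (fun ρ : ℝ => w (ρ • v)) (fderiv ℝ w (ρ • v) v) ρ := fun ρ =>
    (hw1 _).hasFDerivAt.comp_hasDerivAt ρ (by simpa using (hasDerivAt_id ρ).smul_const v)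
  have hg' : Continuous fun ρ : ℝ => fderiv ℝ w (ρ • v) v :=
    ((hw.continuous_fderiv one_ne_zero).comp (by fun_prop)).clm_apply continuous_const
  have hleft : ∀ ρ ∈ Ioi (0 : ℝ), ENNReal.ofReal (ρ ^ (m + 2)) *
      ENNReal.ofReal ((w (ρ • v) / √(∑ a, (ρ • v) a ^ 2)) ^ 2)
        = ENNReal.ofReal c⁻¹ * ENNReal.ofReal (ρ ^ m * w (ρ • v) ^ 2) := by
    intro ρ hρ
    have hnorm : ∑ a, (ρ • v) a ^ 2 = ρ ^ 2 * c := by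
      simp only [Pi.smul_apply, smul_eq_mul, mul_pow, c, Finset.mul_sum]
    rw [← ENNReal.ofReal_mul (pow_nonneg (le_of_lt hρ) _), ← ENNReal.ofReal_mul (by positivity),
      hnorm, div_pow, Real.sq_sqrt (by positivity)]
    have hρ0 : ρ ≠ 0 := ne_of_gt hρ
    congr 1
    field_simp
    ring
  have hright : ∀ ρ ∈ Ioi (0 : ℝ), ENNReal.ofReal c⁻¹ * (ENNReal.ofReal ((2 / (m + 1)) ^ 2) *
      ENNReal.ofReal (ρ ^ (m + 2) * fderiv ℝ w (ρ • v) v ^ 2))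
        ≤ ENNReal.ofReal (ρ ^ (m + 2)) *
          ENNReal.ofReal ((2 / (m + 1)) ^ 2 * ∑ a, fderiv ℝ w (ρ • v) (Pi.single a 1) ^ 2) := by
    intro ρ hρ
    have hρ2 : 0 ≤ ρ ^ (m + 2) := pow_nonneg (le_of_lt hρ) _
    rw [← ENNReal.ofReal_mul (by positivity), ← ENNReal.ofReal_mul (by positivity),
      ← ENNReal.ofReal_mul hρ2]
    apply ENNReal.ofReal_le_ofReal
    have hCS := sq_apply_le_sum_sq_mul_sum_sq (fderiv ℝ w (ρ • v)) v
    rw [inv_mul_le_iff₀ hc]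
    calc (2 / (m + 1)) ^ 2 * (ρ ^ (m + 2) * fderiv ℝ w (ρ • v) v ^ 2)
        ≤ (2 / (m + 1)) ^ 2 *
            (ρ ^ (m + 2) * (c * ∑ a, fderiv ℝ w (ρ • v) (Pi.single a 1) ^ 2)) := by
          gcongr
      _ = _ := by ring
  calc _ = ∫⁻ ρ in Ioi 0, ENNReal.ofReal c⁻¹ * ENNReal.ofReal (ρ ^ m * w (ρ • v) ^ 2) :=
        setLIntegral_congr_fun measurableSet_Ioi hleft
    _ ≤ ENNReal.ofReal c⁻¹ * (ENNReal.ofReal ((2 / (m + 1)) ^ 2) *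
          ∫⁻ ρ in Ioi 0, ENNReal.ofReal (ρ ^ (m + 2) * fderiv ℝ w (ρ • v) v ^ 2)) := by
        rw [lintegral_const_mul' _ _ ENNReal.ofReal_ne_top]
        gcongr
        exact lintegral_Ioi_pow_mul_sq_le m hg hg' (hw'.eventually_smul_eq_zero hv)
    _ ≤ _ := by
        rw [← lintegral_const_mul' _ _ ENNReal.ofReal_ne_top,
          ← lintegral_const_mul' _ _ ENNReal.ofReal_ne_top]
        exact setLIntegral_mono' measurableSet_Ioi hright

theorem hardy_inequality {ι : Type*} [Fintype ι] [DecidableEq ι] (hι : 3 ≤ Fintype.card ι)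
    {w : (ι → ℝ) → ℝ} (hw : ContDiff ℝ 1 w) (hw' : HasCompactSupport w) :
    ∫ x, (w x / √(∑ a, x a ^ 2)) ^ 2
      ≤ (2 / ((Fintype.card ι : ℝ) - 2)) ^ 2 * ∫ x, ∑ a, fderiv ℝ w x (Pi.single a 1) ^ 2 := by
  obtain ⟨m, hm⟩ : ∃ m, Fintype.card ι = m + 3 := ⟨_, (Nat.sub_add_cancel hι).symm⟩
  have : Nonempty ι := Fintype.card_pos_iff.1 (by omega)
  have hdim : Module.finrank ℝ (ι → ℝ) - 1 = m + 2 := by simp [hm]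
  have hC : 2 / ((Fintype.card ι : ℝ) - 2) = 2 / (m + 1) := by rw [hm]; push_cast; ring
  set G := fun x => (2 / (m + 1) : ℝ) ^ 2 * ∑ a, fderiv ℝ w x (Pi.single a 1) ^ 2
  have hGc : Continuous G := by
    have := hw.continuous_fderiv one_ne_zero; fun_prop
  have hGint : Integrable G := by
    refine hGc.integrable_of_hasCompactSupport ?_
    exact (hw'.fderiv ℝ).comp_left (g := fun L : (ι → ℝ) →L[ℝ] ℝ =>
      (2 / (m + 1) : ℝ) ^ 2 * ∑ a, L (Pi.single a 1) ^ 2) (by simp)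
  have hGnn : 0 ≤ G := fun x => by positivity
  have hF : Measurable fun x => (w x / √(∑ a, x a ^ 2)) ^ 2 := by
    have := hw.continuous; fun_prop
  have key : ∫⁻ x, ENNReal.ofReal ((w x / √(∑ a, x a ^ 2)) ^ 2) ≤ ∫⁻ x, ENNReal.ofReal (G x) := by
    rw [lintegral_eq_lintegral_toSphere_lintegral_Ioi _ hF.ennreal_ofReal,
      lintegral_eq_lintegral_toSphere_lintegral_Ioi volume (f := fun x => ENNReal.ofReal (G x))
        hGc.measurable.ennreal_ofReal, hdim]
    exact lintegral_mono fun θ => hardy_inequality_along_ray m hw hw' (ne_zero_of_mem_unit_sphere θ)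
  rw [hC, ← integral_const_mul,
    integral_eq_lintegral_of_nonneg_ae (.of_forall fun x => by positivity) hF.aestronglyMeasurable,
    ← ENNReal.toReal_ofReal (integral_nonneg hGnn)]
  exact ENNReal.toReal_mono ENNReal.ofReal_ne_top
    (key.trans_eq (ofReal_integral_eq_lintegral_ofReal hGint (.of_forall hGnn)).symm)

theorem hyp_zero (s : ℝ) (x : Fin 3 → ℝ) : hyp s x 0 = √(s ^ 2 + ∑ a, x a ^ 2) := rfl

theorem hyp_succ (s : ℝ) (x : Fin 3 → ℝ) (a : Fin 3) : hyp s x a.succ = x a := rfl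

theorem hyp_zero_pos {s : ℝ} (hs : s ≠ 0) (x : Fin 3 → ℝ) : 0 < hyp s x 0 := by
  rw [hyp_zero]; positivity

theorem rfun_hyp (s : ℝ) (x : Fin 3 → ℝ) : rfun (hyp s x) = √(∑ a, x a ^ 2) := by
  rw [rfun, Fin.sum_univ_three]
  rfl

theorem contDiff_hyp {s : ℝ} (hs : s ≠ 0) {n : WithTop ℕ∞} : ContDiff ℝ n (hyp s) := by
  refine contDiff_pi.2 (Fin.cases ?_ fun a => ?_)
  · exact (contDiff_const.add (by fun_prop)).sqrt fun x => by positivity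
  · exact contDiff_apply ℝ ℝ a

theorem fderiv_hyp_zero_apply_single {s : ℝ} (hs : s ≠ 0) (x : Fin 3 → ℝ) (a : Fin 3) :
    fderiv ℝ (fun y => hyp s y 0) x (Pi.single a 1) = x a / hyp s x 0 := by
  simp only [hyp_zero]
  rw [fderiv_sqrt (by fun_prop) (by positivity), fderiv_const_add,
    fderiv_fun_sum fun b _ => by fun_prop]
  have hsq : ∀ b, fderiv ℝ (fun y : Fin 3 → ℝ => y b ^ 2) x (Pi.single a 1)
      = 2 * x b * Pi.single (M := fun _ => ℝ) a 1 b := fun b => by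
    rw [fderiv_fun_pow 2 (by fun_prop), (hasFDerivAt_apply b x).fderiv]
    simp
  simp only [one_div, mul_inv_rev, smul_apply, sum_apply, hsq, Pi.single_apply, mul_ite, mul_one,
    mul_zero, Finset.sum_ite_eq', Finset.mem_univ, ↓reduceIte, smul_eq_mul]
  field_simp

theorem hasFDerivAt_hyp {s : ℝ} (hs : s ≠ 0) (x : Fin 3 → ℝ) :
    HasFDerivAt (hyp s)
      ((fderiv ℝ (fun y => hyp s y 0) x).finCons (ContinuousLinearMap.id ℝ _)) x := by
  have ht : DifferentiableAt ℝ (fun y => hyp s y 0) x :=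
    differentiableAt_pi.1 ((contDiff_hyp hs (n := 1)).differentiable one_ne_zero x) 0
  exact ht.hasFDerivAt.finCons (hasFDerivAt_id x)

theorem fderiv_comp_hyp_apply_single {s : ℝ} (hs : s ≠ 0) {u : (Fin 4 → ℝ) → ℝ}
    (hu : Differentiable ℝ u) (x : Fin 3 → ℝ) (a : Fin 3) :
    fderiv ℝ (fun y => u (hyp s y)) x (Pi.single a 1) = pba a u (hyp s x) := by
  have hvec : (Fin.cons (x a / hyp s x 0) (Pi.single a 1) : Fin 4 → ℝ)
      = (x a / hyp s x 0) • Pi.single 0 1 + Pi.single a.succ 1 := by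
    ext i
    refine Fin.cases ?_ (fun b => ?_) i <;> simp [Pi.single_apply]
  change fderiv ℝ (u ∘ hyp s) x _ = _
  rw [((hu _).hasFDerivAt.comp x (hasFDerivAt_hyp hs x)).fderiv]
  change fderiv ℝ u (hyp s x)
    (Fin.cons (fderiv ℝ (fun y => hyp s y 0) x (Pi.single a 1)) (Pi.single a 1)) = _
  rw [fderiv_hyp_zero_apply_single hs, hvec, map_add, map_smul, pba, hyp_succ]
  rfl

theorem fderiv_const_mul_comp_hyp_apply_single {s : ℝ} (hs : s ≠ 0) {u : (Fin 4 → ℝ) → ℝ}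
    (hu : Differentiable ℝ u) (x : Fin 3 → ℝ) (a : Fin 3) :
    fderiv ℝ (fun y => s * u (hyp s y)) x (Pi.single a 1) = s * pba a u (hyp s x) := by
  have hd : DifferentiableAt ℝ (fun y => u (hyp s y)) x :=
    (hu _).comp x ((contDiff_hyp hs (n := 1)).differentiable one_ne_zero x)
  rw [fderiv_const_mul hd, smul_apply, fderiv_comp_hyp_apply_single hs hu,
    smul_eq_mul]

theorem eventually_hyp_zero_lt_rfun_add (s : ℝ) {c : ℝ} (hc : 0 < c) :
    ∀ᶠ x in cocompact (Fin 3 → ℝ), hyp s x 0 < rfun (hyp s x) + c := by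
  -- `√(s² + r²) < r + c` as soon as `s² ≤ 2 c r`
  filter_upwards [tendsto_norm_cocompact_atTop.eventually_ge_atTop (s ^ 2 / (2 * c))] with x hx
  set r := √(∑ a, x a ^ 2)
  have hr : s ^ 2 ≤ 2 * c * r := by
    rw [div_le_iff₀ (by positivity)] at hx
    nlinarith [norm_le_sqrt_sum_sq x]
  have hr2 : r ^ 2 = ∑ a, x a ^ 2 := Real.sq_sqrt (Finset.sum_nonneg fun a _ => sq_nonneg (x a))
  rw [hyp_zero, rfun_hyp, Real.sqrt_lt' (by positivity)]
  nlinarith [Real.sqrt_nonneg (∑ a, x a ^ 2)]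

theorem eventually_eventuallyEq_zero_comp_hyp (s : ℝ) {c : ℝ} (hc : 0 < c)
    {u : (Fin 4 → ℝ) → ℝ} (hu : ∀ p, p 0 < rfun p + c → u p = 0) :
    ∀ᶠ x in cocompact (Fin 3 → ℝ), u =ᶠ[𝓝 (hyp s x)] 0 := by
  have hopen : IsOpen {p : Fin 4 → ℝ | p 0 < rfun p + c} :=
    isOpen_lt (by fun_prop) (by unfold rfun; fun_prop)
  filter_upwards [eventually_hyp_zero_lt_rfun_add s hc] with x hx
  exact (hopen.eventually_mem hx).mono hu

theorem hasCompactSupport_comp_hyp {s : ℝ} {u : (Fin 4 → ℝ) → ℝ}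
    (hvan : ∀ᶠ x in cocompact (Fin 3 → ℝ), u =ᶠ[𝓝 (hyp s x)] 0) :
    HasCompactSupport fun x => u (hyp s x) := by
  rw [hasCompactSupport_iff_eventuallyEq, coclosedCompact_eq_cocompact]
  exact hvan.mono fun x hx => hx.eq_of_nhds

theorem pd_eq_zero_of_eventuallyEq_zero {u : (Fin 4 → ℝ) → ℝ} {p : Fin 4 → ℝ}
    (h : u =ᶠ[𝓝 p] 0) (i : Fin 4) : pd i u p = 0 := by
  simp [pd, h.fderiv_eq]

theorem continuous_pd {u : (Fin 4 → ℝ) → ℝ} (hu : ContDiff ℝ 1 u) (i : Fin 4) :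
    Continuous (pd i u) :=
  (hu.continuous_fderiv one_ne_zero).clm_apply continuous_const

theorem continuous_energy_density_comp_hyp {s : ℝ} (hs : s ≠ 0) {u : (Fin 4 → ℝ) → ℝ}
    (hu : ContDiff ℝ 1 u) :
    Continuous fun x => (∑ a : Fin 3, (s * pba a u (hyp s x)) ^ 2)
      + (Kop u (hyp s x) + 2 * u (hyp s x)) ^ 2 := by
  have hhyp : Continuous (hyp s) := (contDiff_hyp hs (n := 0)).continuous
  have hpd : ∀ i, Continuous fun x => pd i u (hyp s x) := fun i => (continuous_pd hu i).comp hhyp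
  have hu0 : Continuous fun x => u (hyp s x) := hu.continuous.comp hhyp
  have h0 : ∀ x, hyp s x 0 ≠ 0 := fun x => (hyp_zero_pos hs x).ne'
  unfold Kop pbs pba sfun
  fun_prop (disch := exact h0)

theorem integral_sum_sq_le_Ec {s : ℝ} (hs : s ≠ 0) {u : (Fin 4 → ℝ) → ℝ} (hu : ContDiff ℝ 1 u)
    (hvan : ∀ᶠ x in cocompact (Fin 3 → ℝ), u =ᶠ[𝓝 (hyp s x)] 0) :
    ∫ x, ∑ a : Fin 3, (s * pba a u (hyp s x)) ^ 2 ≤ Ec s u := by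
  have hint : Integrable fun x : Fin 3 → ℝ =>
      (∑ a : Fin 3, (s * pba a u (hyp s x)) ^ 2) + (Kop u (hyp s x) + 2 * u (hyp s x)) ^ 2 := by
    refine (continuous_energy_density_comp_hyp hs hu).integrable_of_hasCompactSupport ?_
    rw [hasCompactSupport_iff_eventuallyEq, coclosedCompact_eq_cocompact]
    filter_upwards [hvan] with x hx
    simp [Kop, pbs, pba, pd_eq_zero_of_eventuallyEq_zero hx, hx.eq_of_nhds]
  exact integral_mono_of_nonneg (.of_forall fun x => by positivity) hint
    (.of_forall fun x => le_add_of_nonneg_right (sq_nonneg _))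

/-- Hardy-type control of `u` by the conformal energy:
`‖(s/r)u‖_{L²(H_s)} ≤ 2 E_c(s,u)^{1/2}`. -/
theorem stmt_8 (s : ℝ) (hs : 0 < s)
    (u : (Fin 4 → ℝ) → ℝ) (hu : ContDiff ℝ 2 u)
    (hsupp : ∃ δ > (0 : ℝ), ∀ p : Fin 4 → ℝ, p 0 < rfun p + 1 + δ → u p = 0) :
    Real.sqrt (∫ x : Fin 3 → ℝ,
        ((s / Real.sqrt (∑ a, (x a) ^ 2)) * u (hyp s x)) ^ 2)
      ≤ 2 * Real.sqrt (Ec s u) := by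
  obtain ⟨δ, hδ, hvan⟩ := hsupp
  have hs0 : s ≠ 0 := hs.ne'
  have hu1 : ContDiff ℝ 1 u := hu.of_le one_le_two
  have hnear := eventually_eventuallyEq_zero_comp_hyp s (by positivity : 0 < 1 + δ)
    fun p hp => hvan p (by linarith)
  have hardy := hardy_inequality (w := fun x => s * u (hyp s x)) (by simp)
    (contDiff_const.mul (hu1.comp (contDiff_hyp hs0))) (hasCompactSupport_comp_hyp hnear).mul_left
  have hC : (2 / ((Fintype.card (Fin 3) : ℝ) - 2)) ^ 2 = 2 ^ 2 := by norm_num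
  simp_rw [hC, fderiv_const_mul_comp_hyp_apply_single hs0 (hu1.differentiable one_ne_zero)]
    at hardy
  calc √(∫ x : Fin 3 → ℝ, ((s / √(∑ a, x a ^ 2)) * u (hyp s x)) ^ 2)
      = √(∫ x, (s * u (hyp s x) / √(∑ a, x a ^ 2)) ^ 2) := by simp_rw [div_mul_eq_mul_div]
    _ ≤ √(2 ^ 2 * Ec s u) := Real.sqrt_le_sqrt <| hardy.trans <| by
        gcongr; exact integral_sum_sq_le_Ec hs0 hu1 hnear
    _ = 2 * √(Ec s u) := by rw [Real.sqrt_mul (by positivity), Real.sqrt_sq zero_le_two]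
end
end

section
/- Null quadratic forms in the semi-hyperboloidal frame: let T be a constant quadratic form on R^4 that vanishes on null covectors (T^{αβ}ξ_αξ_β = 0 whenever ξ_0² = Σ_a ξ_a²). Then in the region {t/2 < |x| < t}, the frame component T̄^{00} = T^{αβ}Ψ^0_αΨ^0_β with Ψ^0 = (t/s, −x^1/s, −x^2/s, −x^3/s) satisfies T̄^{00} = ((t−r)/(t+r))·T^{00} + (t/(t+r))·T^{0β}ξ_β + (t/(t+r))·T^{α0}ξ_α, where ξ = (r/t, x^1/t, x^2/t, x^3/t) and r = |x|; in particular |T̄^{00}| ≤ C with C depending only on T. -/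
open MeasureTheory

noncomputable section

/-!
A quadratic form vanishing on the light cone is a multiple of the Minkowski form: testing it
on the null covectors `e₀ ± e_a` and `5e₀ + 3e_a + 4e_b` shows `T + Tᵀ = 2 T⁰⁰ η`. Hence
`T(Ψ⁰, Ψ⁰) = T⁰⁰ η(Ψ⁰, Ψ⁰) = T⁰⁰`, because `Ψ⁰` is a unit timelike covector, and
`T^{0β} ξ_β + T^{α0} ξ_α = 2 T⁰⁰ ξ₀ = 2 T⁰⁰ r / t`, which makes the right-hand side `T⁰⁰`
as well.
-/

open Matrix

theorem Matrix.dotProduct_mulVec_self_eq_sum {ι R : Type*} [Fintype ι] [CommSemiring R]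
    (T : Matrix ι ι R) (ξ : ι → R) :
    ξ ⬝ᵥ T *ᵥ ξ = ∑ α, ∑ β, T α β * ξ α * ξ β := by
  simp only [dotProduct, mulVec, Finset.mul_sum]
  exact Finset.sum_congr rfl fun _ _ => Finset.sum_congr rfl fun _ _ => by ring

def minkowskiMatrix (n : ℕ) : Matrix (Fin (n + 1)) (Fin (n + 1)) ℝ :=
  diagonal (Fin.cons 1 fun _ => -1)

theorem dotProduct_minkowskiMatrix_mulVec {n : ℕ} (ξ ζ : Fin (n + 1) → ℝ) :
    ξ ⬝ᵥ minkowskiMatrix n *ᵥ ζ = ξ 0 * ζ 0 - ∑ a : Fin n, ξ a.succ * ζ a.succ := by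
  simp [minkowskiMatrix, dotProduct, mulVec_diagonal, Fin.sum_univ_succ, sub_eq_add_neg]

def IsNullForm {n : ℕ} (T : Matrix (Fin (n + 1)) (Fin (n + 1)) ℝ) : Prop :=
  ∀ ξ : Fin (n + 1) → ℝ, ξ 0 ^ 2 = ∑ a : Fin n, ξ a.succ ^ 2 → ξ ⬝ᵥ T *ᵥ ξ = 0

theorem Matrix.dotProduct_mulVec_single_add_single {ι R : Type*} [Fintype ι] [DecidableEq ι]
    [CommSemiring R] (T : Matrix ι ι R) (i j : ι) (x y : R) :
    (Pi.single i x + Pi.single j y) ⬝ᵥ T *ᵥ (Pi.single i x + Pi.single j y) =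
      x ^ 2 * T i i + x * y * (T i j + T j i) + y ^ 2 * T j j := by
  simp only [mulVec_add, mulVec_single, op_smul_eq_smul, dotProduct_add, dotProduct_smul,
    add_dotProduct, single_dotProduct, col_apply, smul_eq_mul]
  ring

namespace IsNullForm

variable {n : ℕ} {T : Matrix (Fin (n + 1)) (Fin (n + 1)) ℝ}

theorem apply_single_zero_add_single_succ (hT : IsNullForm T) (a : Fin n) {c : ℝ}
    (hc : c ^ 2 = 1) :
    T 0 0 + c * (T 0 a.succ + T a.succ 0) + T a.succ a.succ = 0 := by
  have := hT (Pi.single 0 1 + Pi.single a.succ c) (by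
    simp [Pi.single_apply, Fin.succ_ne_zero, hc])
  rw [dotProduct_mulVec_single_add_single] at this
  linear_combination this - T a.succ a.succ * hc

theorem diag_succ (hT : IsNullForm T) (a : Fin n) : T a.succ a.succ = -T 0 0 := by
  linarith [hT.apply_single_zero_add_single_succ a (c := 1) (by norm_num),
    hT.apply_single_zero_add_single_succ a (c := -1) (by norm_num)]

theorem zero_succ_add_succ_zero (hT : IsNullForm T) (a : Fin n) : T 0 a.succ + T a.succ 0 = 0 := by
  linarith [hT.apply_single_zero_add_single_succ a (c := 1) (by norm_num),
    hT.apply_single_zero_add_single_succ a (c := -1) (by norm_num)]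

theorem succ_succ_add_succ_succ (hT : IsNullForm T) {a b : Fin n} (hab : a ≠ b) :
    T a.succ b.succ + T b.succ a.succ = 0 := by
  have := hT (Pi.single 0 5 + Pi.single a.succ 3 + Pi.single b.succ 4) (by
    norm_num [Pi.single_apply, Fin.succ_ne_zero, add_sq, Finset.sum_add_distrib, ite_pow, mul_ite,
      ite_mul, hab.symm])
  simp only [mulVec_add, mulVec_single, dotProduct_add, dotProduct_smul, add_dotProduct,
    single_dotProduct, col_apply, smul_add, MulOpposite.smul_eq_mul_unop, MulOpposite.op_ofNat,
    MulOpposite.unop_ofNat] at this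
  linarith [hT.diag_succ a, hT.diag_succ b, hT.zero_succ_add_succ_zero a,
    hT.zero_succ_add_succ_zero b]

theorem add_transpose (hT : IsNullForm T) : T + Tᵀ = (2 * T 0 0) • minkowskiMatrix n := by
  ext i j
  cases i using Fin.cases with
  | zero => cases j using Fin.cases with
    | zero =>
      simp only [Matrix.add_apply, transpose_apply, Matrix.smul_apply, minkowskiMatrix,
        diagonal_apply_eq, Fin.cons_zero, smul_eq_mul]
      ring
    | succ b =>
      simp [minkowskiMatrix, diagonal_apply_ne _ (Fin.succ_ne_zero b).symm,
        hT.zero_succ_add_succ_zero b]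
  | succ a => cases j using Fin.cases with
    | zero =>
      simpa [minkowskiMatrix, diagonal_apply_ne _ (Fin.succ_ne_zero a), add_comm]
        using hT.zero_succ_add_succ_zero a
    | succ b =>
      rcases eq_or_ne a b with rfl | hab
      · simp only [Matrix.add_apply, transpose_apply, Matrix.smul_apply, minkowskiMatrix,
          diagonal_apply_eq, Fin.cons_succ, smul_eq_mul, hT.diag_succ a]
        ring
      · simp [minkowskiMatrix, hab, hT.succ_succ_add_succ_succ hab]

theorem dotProduct_mulVec_self (hT : IsNullForm T) (ξ : Fin (n + 1) → ℝ) :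
    ξ ⬝ᵥ T *ᵥ ξ = T 0 0 * (ξ 0 ^ 2 - ∑ a : Fin n, ξ a.succ ^ 2) := by
  have hsymm : ξ ⬝ᵥ Tᵀ *ᵥ ξ = ξ ⬝ᵥ T *ᵥ ξ := by
    rw [dotProduct_mulVec, vecMul_transpose, dotProduct_comm]
  have h2 : ξ ⬝ᵥ (T + Tᵀ) *ᵥ ξ = 2 * T 0 0 * (ξ 0 ^ 2 - ∑ a : Fin n, ξ a.succ ^ 2) := by
    rw [hT.add_transpose, smul_mulVec, dotProduct_smul, dotProduct_minkowskiMatrix_mulVec]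
    simp [sq]
  rw [add_mulVec, dotProduct_add, hsymm] at h2
  linarith

theorem row_zero_add_col_zero (hT : IsNullForm T) (ξ : Fin (n + 1) → ℝ) :
    ∑ β, T 0 β * ξ β + ∑ α, T α 0 * ξ α = 2 * T 0 0 * ξ 0 := by
  calc ∑ β, T 0 β * ξ β + ∑ α, T α 0 * ξ α = ((T + Tᵀ) *ᵥ ξ) 0 := by
        simp [mulVec, dotProduct, add_mul, Finset.sum_add_distrib]
    _ = 2 * T 0 0 * ξ 0 := by
        rw [hT.add_transpose, smul_mulVec, Pi.smul_apply]
        simp [minkowskiMatrix, mulVec_diagonal]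

end IsNullForm

/-- null quadratic forms in the semi-hyperboloidal frame:
decomposition of `T̄^{00}` and its uniform boundedness in `{t/2 < |x| < t}`. -/
theorem stmt_15 (T : Matrix (Fin 4) (Fin 4) ℝ)
    (hnull : ∀ ξ : Fin 4 → ℝ, (ξ 0) ^ 2 = ∑ a : Fin 3, (ξ a.succ) ^ 2 →
      ∑ α, ∑ β, T α β * ξ α * ξ β = 0) :
    ∃ C : ℝ, ∀ (t : ℝ) (x : Fin 3 → ℝ),
      t / 2 < Real.sqrt (∑ a, (x a) ^ 2) →
      Real.sqrt (∑ a, (x a) ^ 2) < t →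
      (let r := Real.sqrt (∑ a, (x a) ^ 2)
       let s := Real.sqrt (t ^ 2 - r ^ 2)
       let ψ : Fin 4 → ℝ := Fin.cons (t / s) (fun a => -(x a) / s)
       let ξ : Fin 4 → ℝ := Fin.cons (r / t) (fun a => x a / t)
       (∑ α, ∑ β, T α β * ψ α * ψ β =
          ((t - r) / (t + r)) * T 0 0
          + (t / (t + r)) * ∑ β, T 0 β * ξ β
          + (t / (t + r)) * ∑ α, T α 0 * ξ α) ∧
       |∑ α, ∑ β, T α β * ψ α * ψ β| ≤ C) := by
  have hT : IsNullForm T := fun ξ hξ => by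
    rw [dotProduct_mulVec_self_eq_sum]
    exact hnull ξ hξ
  refine ⟨|T 0 0|, fun t x _ hup => ?_⟩
  intro r s ψ ξ
  have ht : 0 < t := (Real.sqrt_nonneg _).trans_lt hup
  have hr : r ^ 2 = ∑ a, x a ^ 2 := Real.sq_sqrt (by positivity)
  have hs : s ^ 2 = t ^ 2 - r ^ 2 := Real.sq_sqrt (by nlinarith)
  have hs0 : 0 < s := Real.sqrt_pos.2 (by nlinarith)
  have hψ_unit : (t / s) ^ 2 - ∑ a, (-x a / s) ^ 2 = 1 := by
    simp only [div_pow, neg_sq, ← Finset.sum_div, ← hr]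
    field_simp
    linarith
  have hψ : ∑ α, ∑ β, T α β * ψ α * ψ β = T 0 0 := by
    rw [← dotProduct_mulVec_self_eq_sum, hT.dotProduct_mulVec_self]
    simp only [ψ, Fin.cons_zero, Fin.cons_succ, hψ_unit, mul_one]
  refine ⟨?_, by rw [hψ]⟩
  rw [hψ, add_assoc, ← mul_add, hT.row_zero_add_col_zero ξ]
  have htr : 0 < t + r := add_pos_of_pos_of_nonneg ht (Real.sqrt_nonneg _)
  simp only [ξ, Fin.cons_zero]
  field_simp
  ring
end
end
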